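/- arXiv:1602.01162 — 2 statements merged into one kernel-verified Lean document; each statement's English description precedes it below -/
import Mathlib

section
/- For n ≥ 3, let D₁ be the directed graph on vertices v_1,…,v_n with edges (v_i,v_{i+1}) for 1 ≤ i ≤ n−1, edges (v_j,v_i) for all 1 ≤ i < j ≤ n−1, and the edge (v_n,v_1). Let φ be its Perron vector. Then min_{1≤i≤n} φ(v_i) = φ(v_n), max_{1≤i≤n} φ(v_i) = φ(v_2), and γ(D₁) = φ(v_2)/φ(v_n) = (2/3)·(n/(n−1) + (1/(n−1)!)·Σ_{i=1}^{n−3} i!)·(n−1)!. -/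
/-!
Write `φ_j = φ(v_j)` and `T_j = ∑_{j ≤ u < n} φ_u / u`. Stationarity across the cut
`{v_1,…,v_j} | {v_{j+1},…,v_n}` (the walk leaves only along `v_j → v_{j+1}` and re-enters along
every back edge out of `v_{j+1},…,v_{n-1}` and along `v_n → v_1`) gives
`φ_j / j = j T_{j+1} + φ_n`, so `φ_n` is the minimum. Subtracting consecutive balances gives
`(j+1)² φ_j = j² (j+2) φ_{j+1} + j (j+1) φ_n`, which makes `φ` decrease along `v_2,…,v_{n-1}`
and telescopes to `3 φ_2 = 2 φ_n ∑_{i=1}^{n-1} i!`; finally `φ_1 ≤ φ_2` is the stationarity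
equation at `v_2`.
-/

namespace PR

/-- Out-degree of `u` in the digraph on vertex set `{1,…,n} ⊆ ℕ` with adjacency `E`. -/
def outDeg (n : ℕ) (E : ℕ → ℕ → Bool) (u : ℕ) : ℕ :=
  ((Finset.Icc 1 n).filter (fun v => E u v)).card

/-- In-degree of `u`. -/
def inDeg (n : ℕ) (E : ℕ → ℕ → Bool) (u : ℕ) : ℕ :=
  ((Finset.Icc 1 n).filter (fun v => E v u)).card

/-- `E` is a simple digraph on the vertex set `{1,…,n}`: all edges join distinct
vertices of `{1,…,n}` (no loops; the `Bool`-valued adjacency precludes multi-edges). -/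
def IsDigraph (n : ℕ) (E : ℕ → ℕ → Bool) : Prop :=
  ∀ u v, E u v = true → u ∈ Finset.Icc 1 n ∧ v ∈ Finset.Icc 1 n ∧ u ≠ v

/-- `WalkLen E k u v` : there is a directed walk of length `k` from `u` to `v`. -/
def WalkLen (E : ℕ → ℕ → Bool) : ℕ → ℕ → ℕ → Prop
  | 0, u, v => u = v
  | (k+1), u, v => ∃ w, E u w = true ∧ WalkLen E k w v

/-- Every vertex reaches every other vertex by a directed walk. -/
def StronglyConnected (n : ℕ) (E : ℕ → ℕ → Bool) : Prop :=
  ∀ u ∈ Finset.Icc 1 n, ∀ v ∈ Finset.Icc 1 n, ∃ k, WalkLen E k u v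

/-- Directed distance: number of edges in a shortest directed path from `u` to `v`. -/
noncomputable def dist (E : ℕ → ℕ → Bool) (u v : ℕ) : ℕ :=
  sInf {k | WalkLen E k u v}

/-- Distance between two sets of vertices. -/
noncomputable def setDist (E : ℕ → ℕ → Bool) (A B : Set ℕ) : ℕ :=
  sInf {k | ∃ a ∈ A, ∃ b ∈ B, dist E a b = k}

/-- `φ` is the Perron vector of the simple random walk on the digraph: a positive
probability distribution on `{1,…,n}` which is stationary, i.e. `φ P = φ` where
`P(u,v) = 1/d⁺(u)` for edges `(u,v)` and `0` otherwise. -/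
def IsPerron (n : ℕ) (E : ℕ → ℕ → Bool) (φ : ℕ → ℝ) : Prop :=
  (∀ v ∈ Finset.Icc 1 n, 0 < φ v) ∧
  (∑ v ∈ Finset.Icc 1 n, φ v = 1) ∧
  (∀ v ∈ Finset.Icc 1 n, φ v =
    ∑ u ∈ Finset.Icc 1 n, if E u v then φ u / (outDeg n E u : ℝ) else 0)

/-- The principal ratio `γ = (max_u φ(u)) / (min_u φ(u))` of a vector `φ` on `{1,…,n}`. -/
noncomputable def pratio (n : ℕ) (φ : ℕ → ℝ) : ℝ :=
  if h : (Finset.Icc 1 n).Nonempty then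
    ((Finset.Icc 1 n).sup' h φ) / ((Finset.Icc 1 n).inf' h φ)
  else 0

/-- Vertices attaining the maximum of `φ`. -/
def Vmax (n : ℕ) (φ : ℕ → ℝ) : Set ℕ :=
  {v | v ∈ Finset.Icc 1 n ∧ ∀ u ∈ Finset.Icc 1 n, φ u ≤ φ v}

/-- Vertices attaining the minimum of `φ`. -/
def Vmin (n : ℕ) (φ : ℕ → ℝ) : Set ℕ :=
  {v | v ∈ Finset.Icc 1 n ∧ ∀ u ∈ Finset.Icc 1 n, φ v ≤ φ u}

/-- The extremal graph `D₁`: path edges `(v_i,v_{i+1})` for `1 ≤ i ≤ n-1`, back edges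
`(v_j,v_i)` for `1 ≤ i < j ≤ n-1`, and the edge `(v_n,v_1)`. -/
def E1 (n : ℕ) : ℕ → ℕ → Bool := fun u v =>
  decide ((1 ≤ u ∧ u ≤ n - 1 ∧ v = u + 1) ∨ (1 ≤ v ∧ v < u ∧ u ≤ n - 1) ∨
    (u = n ∧ v = 1))

/-- The extremal graph `D₂`: as `D₁` but with `(v_n,v_2)` instead of `(v_n,v_1)`. -/
def E2 (n : ℕ) : ℕ → ℕ → Bool := fun u v =>
  decide ((1 ≤ u ∧ u ≤ n - 1 ∧ v = u + 1) ∨ (1 ≤ v ∧ v < u ∧ u ≤ n - 1) ∨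
    (u = n ∧ v = 2))

/-- The extremal graph `D₃`: as `D₁` but with both edges `(v_n,v_1)` and `(v_n,v_2)`. -/
def E3 (n : ℕ) : ℕ → ℕ → Bool := fun u v =>
  decide ((1 ≤ u ∧ u ≤ n - 1 ∧ v = u + 1) ∨ (1 ≤ v ∧ v < u ∧ u ≤ n - 1) ∨
    (u = n ∧ (v = 1 ∨ v = 2)))

open Finset

section Perron

variable {n : ℕ} {E : ℕ → ℕ → Bool} {φ : ℕ → ℝ}

theorem IsPerron.apply_eq_sum_inNbrs (hφ : IsPerron n E φ) {v : ℕ} (hv : v ∈ Icc 1 n) :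
    φ v = ∑ u ∈ (Icc 1 n).filter (fun u => E u v), φ u / outDeg n E u := by
  rw [sum_filter]
  exact hφ.2.2 v hv

theorem IsPerron.sum_Ico_div_nonneg (hφ : IsPerron n E φ) (a : ℕ) :
    0 ≤ ∑ u ∈ Ico a n, φ u / u := by
  refine sum_nonneg fun u hu => ?_
  rcases Nat.eq_zero_or_pos u with rfl | hu0
  · simp
  · have := hφ.1 u (by simp only [mem_Ico] at hu; simp only [mem_Icc]; omega)
    positivity

theorem pratio_eq_div {a b : ℕ} (ha : a ∈ Icc 1 n) (hb : b ∈ Icc 1 n)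
    (hmax : ∀ i ∈ Icc 1 n, φ i ≤ φ a) (hmin : ∀ i ∈ Icc 1 n, φ b ≤ φ i) :
    pratio n φ = φ a / φ b := by
  have hne : (Icc 1 n).Nonempty := ⟨a, ha⟩
  rw [pratio, dif_pos hne,
    le_antisymm (sup'_le hne φ hmax) (le_sup' φ ha),
    le_antisymm (inf'_le φ hb) (le_inf' hne φ hmin)]

end Perron

theorem E1_outDeg {n u : ℕ} (hu : 1 ≤ u) (hun : u < n) : outDeg n (E1 n) u = u := by
  have h : (Icc 1 n).filter (fun v => E1 n u v) = insert (u + 1) (Ico 1 u) := by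
    ext w
    simp only [mem_filter, mem_Icc, mem_insert, mem_Ico, E1, decide_eq_true_eq]
    omega
  rw [outDeg, h, card_insert_of_notMem (by simp), Nat.card_Ico]
  omega

theorem E1_inNbrs_succ {n v : ℕ} (hv : 1 ≤ v) (hvn : v + 2 ≤ n) :
    (Icc 1 n).filter (fun u => E1 n u (v + 1)) = insert v (Ico (v + 2) n) := by
  ext u
  simp only [mem_filter, mem_Icc, mem_insert, mem_Ico, E1, decide_eq_true_eq]
  omega

theorem E1_inNbrs_self {n : ℕ} (hn : 2 ≤ n) :
    (Icc 1 n).filter (fun u => E1 n u n) = {n - 1} := by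
  ext u
  simp only [mem_filter, mem_Icc, mem_singleton, E1, decide_eq_true_eq]
  omega

section E1

variable {n : ℕ} {φ : ℕ → ℝ}

theorem IsPerron.E1_apply_succ (hφ : IsPerron n (E1 n) φ) {v : ℕ} (hv : 1 ≤ v)
    (hvn : v + 2 ≤ n) : φ (v + 1) = φ v / v + ∑ u ∈ Ico (v + 2) n, φ u / u := by
  rw [hφ.apply_eq_sum_inNbrs (by simp only [mem_Icc]; omega), E1_inNbrs_succ hv hvn,
    sum_insert (by simp), E1_outDeg hv (by omega)]
  congr 1
  refine sum_congr rfl fun u hu => ?_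
  simp only [mem_Ico] at hu
  rw [E1_outDeg (by omega) hu.2]

theorem IsPerron.E1_apply_last (hφ : IsPerron n (E1 n) φ) (hn : 2 ≤ n) :
    φ (n - 1) / (n - 1 : ℕ) = φ n := by
  rw [hφ.apply_eq_sum_inNbrs (v := n) (by simp only [mem_Icc]; omega), E1_inNbrs_self hn,
    sum_singleton, E1_outDeg (by omega) (by omega)]

theorem IsPerron.E1_cut_balance (hφ : IsPerron n (E1 n) φ) {v : ℕ} (hv : 1 ≤ v) (hvn : v < n) :
    φ v / v = v * ∑ u ∈ Ico (v + 1) n, φ u / u + φ n := by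
  induction Nat.le_sub_one_of_lt hvn using Nat.decreasingInduction with
  | self =>
    rw [Nat.sub_add_cancel (by omega), Ico_self, sum_empty, mul_zero, zero_add]
    exact hφ.E1_apply_last (by omega)
  | of_succ k hk ih =>
    have ih := ih (by omega) (by omega)
    have hstep := hφ.E1_apply_succ hv (by omega)
    have hdiv : φ (k + 1) = (k + 1 : ℕ) * (φ (k + 1) / (k + 1 : ℕ)) := by
      field_simp
    rw [sum_eq_sum_Ico_succ_bot (by omega)]
    push_cast at ih hdiv ⊢
    linear_combination -hstep + ih + hdiv

theorem IsPerron.E1_recurrence (hφ : IsPerron n (E1 n) φ) {v : ℕ} (hv : 1 ≤ v) (hvn : v + 2 ≤ n) :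
    ((v : ℝ) + 1) ^ 2 * φ v = v ^ 2 * (v + 2) * φ (v + 1) + v * (v + 1) * φ n := by
  have hcut := hφ.E1_cut_balance hv (by omega)
  have hcut' := hφ.E1_cut_balance (v := v + 1) (by omega) (by omega)
  rw [sum_eq_sum_Ico_succ_bot (by omega)] at hcut
  have hv0 : (v : ℝ) ≠ 0 := by positivity
  have hdiv : φ v = v * (φ v / v) := by field_simp
  have hdiv' : φ (v + 1) = (v + 1 : ℕ) * (φ (v + 1) / (v + 1 : ℕ)) := by field_simp
  push_cast at hcut hcut' hdiv' ⊢
  linear_combination (v + 1 : ℝ) ^ 2 * hdiv - (v : ℝ) ^ 2 * (v + 2) * hdiv' +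
    (v : ℝ) * (v + 1) * ((v + 1) * hcut - v * hcut')

/-- Divided by `(k+1)(k+2)/k!`, `E1_recurrence` says that `w k = (k+2) k! φ(v_{k+1}) / (k+1)`
satisfies `w k = w (k+1) + k! φ(v_n)`, so it telescopes down from `w (n-2) = n (n-2)! φ(v_n)`. -/
theorem IsPerron.E1_closed_form (hφ : IsPerron n (E1 n) φ) {k : ℕ} (hk : k + 2 ≤ n) :
    ((k : ℝ) + 2) * k.factorial * φ (k + 1) =
      (k + 1) * φ n * ∑ i ∈ Ico k n, (i.factorial : ℝ) := by
  induction Nat.le_sub_of_add_le hk using Nat.decreasingInduction with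
  | self =>
    obtain ⟨m, rfl⟩ : ∃ m, n = m + 2 := ⟨n - 2, by omega⟩
    have hlast := hφ.E1_apply_last (by omega)
    simp only [Nat.add_sub_cancel, show m + 2 - 1 = m + 1 by omega] at hlast ⊢
    rw [sum_Ico_succ_top (by omega), sum_Ico_succ_top le_rfl, Ico_self, sum_empty,
      Nat.factorial_succ, ← hlast]
    push_cast
    field_simp
    ring
  | of_succ k hk' ih =>
    have ih := ih (by omega)
    have hstep := hφ.E1_recurrence (v := k + 1) (by omega) (by omega)
    rw [sum_eq_sum_Ico_succ_bot (by omega)]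
    rw [Nat.factorial_succ] at ih
    push_cast at ih hstep ⊢
    refine mul_left_cancel₀ (by positivity : (k : ℝ) + 2 ≠ 0) ?_
    linear_combination (k.factorial : ℝ) * hstep + (k + 1 : ℝ) * ih

theorem IsPerron.E1_apply_succ_le (hφ : IsPerron n (E1 n) φ) {v : ℕ} (hv : 2 ≤ v)
    (hvn : v + 2 ≤ n) : φ (v + 1) ≤ φ v := by
  have hstep := hφ.E1_recurrence (by omega) hvn
  have hpos := hφ.1 (v + 1) (by simp only [mem_Icc]; omega)
  have hlast := hφ.1 n (by simp only [mem_Icc]; omega)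
  have hv' : (2 : ℝ) ≤ v := by exact_mod_cast hv
  have hcoef : ((v : ℝ) + 1) ^ 2 ≤ v ^ 2 * (v + 2) := by nlinarith
  refine le_of_mul_le_mul_left ?_ (by positivity : (0 : ℝ) < ((v : ℝ) + 1) ^ 2)
  nlinarith [mul_le_mul_of_nonneg_right hcoef hpos.le]

theorem IsPerron.E1_apply_last_le (hφ : IsPerron n (E1 n) φ) {i : ℕ} (hi : i ∈ Icc 1 n) :
    φ n ≤ φ i := by
  rw [mem_Icc] at hi
  rcases hi.2.eq_or_lt with rfl | hin
  · exact le_rfl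
  have hcut := hφ.E1_cut_balance hi.1 hin
  have htail := hφ.sum_Ico_div_nonneg (i + 1)
  calc φ n ≤ φ i / i := by rw [hcut]; nlinarith
    _ ≤ φ i := div_le_self (hφ.1 i (by simp only [mem_Icc]; omega)).le (by exact_mod_cast hi.1)

theorem IsPerron.E1_le_apply_two (hφ : IsPerron n (E1 n) φ) (hn : 3 ≤ n) {i : ℕ}
    (hi : i ∈ Icc 1 n) : φ i ≤ φ 2 := by
  rw [mem_Icc] at hi
  rcases hi.1.eq_or_lt with rfl | hi1
  · have h := hφ.E1_apply_succ le_rfl hn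
    have htail := hφ.sum_Ico_div_nonneg 3
    norm_num at h
    linarith
  rcases hi.2.eq_or_lt with rfl | hin
  · exact hφ.E1_apply_last_le (by simp only [mem_Icc]; omega)
  induction i, (show 2 ≤ i by omega) using Nat.le_induction with
  | base => exact le_rfl
  | succ k hk ih =>
    exact (hφ.E1_apply_succ_le hk (by omega)).trans (ih (by omega) (by omega) (by omega))

end E1

theorem sum_Ico_one_factorial_eq {n : ℕ} (hn : 3 ≤ n) :
    ∑ i ∈ Ico 1 n, (i.factorial : ℝ) =
      ((n : ℝ) / ((n : ℝ) - 1) +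
        (1 / ((n - 1).factorial : ℝ)) * ∑ i ∈ Icc 1 (n - 3), (i.factorial : ℝ)) *
          ((n - 1).factorial : ℝ) := by
  obtain ⟨m, rfl⟩ : ∃ m, n = m + 3 := ⟨n - 3, by omega⟩
  simp only [show m + 3 - 1 = m + 2 by omega, Nat.add_sub_cancel]
  rw [sum_Ico_succ_top (by omega), sum_Ico_succ_top (by omega), Ico_add_one_right_eq_Icc,
    Nat.factorial_succ (m + 1)]
  push_cast
  rw [show (m : ℝ) + 3 - 1 = m + 2 by ring]
  field_simp
  ring

/-- The Perron vector of `D₁` attains its minimum at `v_n` and its maximum at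
`v_2`, and `γ(D₁) = φ(v_2)/φ(v_n) = (2/3)(n/(n-1) + (1/(n-1)!)∑_{i=1}^{n-3} i!)(n-1)!`. -/
theorem stmt15 (n : ℕ) (hn : 3 ≤ n) (φ : ℕ → ℝ) (hφ : IsPerron n (E1 n) φ) :
    (∀ i ∈ Finset.Icc 1 n, φ n ≤ φ i) ∧
    (∀ i ∈ Finset.Icc 1 n, φ i ≤ φ 2) ∧
    pratio n φ = φ 2 / φ n ∧
    φ 2 / φ n = (2/3 : ℝ) *
      ((n : ℝ) / ((n : ℝ) - 1) +
        (1 / (Nat.factorial (n - 1) : ℝ)) *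
          ∑ i ∈ Finset.Icc 1 (n - 3), (Nat.factorial i : ℝ)) *
      (Nat.factorial (n - 1) : ℝ) := by
  have hmin : ∀ i ∈ Icc 1 n, φ n ≤ φ i := fun i hi => hφ.E1_apply_last_le hi
  have hmax : ∀ i ∈ Icc 1 n, φ i ≤ φ 2 := fun i hi => hφ.E1_le_apply_two hn hi
  refine ⟨hmin, hmax, pratio_eq_div (by simp only [mem_Icc]; omega)
    (by simp only [mem_Icc]; omega) hmax hmin, ?_⟩
  have hclosed := hφ.E1_closed_form (k := 1) (by omega)
  have hlast := hφ.1 n (by simp only [mem_Icc]; omega)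
  rw [mul_assoc, ← sum_Ico_one_factorial_eq hn]
  norm_num at hclosed
  field_simp
  linarith

end PR
end

section
/- For n ≥ 3, let D₁, D₂, D₃ be the directed graphs on vertices v_1,…,v_n whose edge sets are {(v_i,v_{i+1}) : 1 ≤ i ≤ n−1} ∪ {(v_j,v_i) : 1 ≤ i < j ≤ n−1} ∪ S, where S = {(v_n,v_1)} for D₁, S = {(v_n,v_2)} for D₂, and S = {(v_n,v_1),(v_n,v_2)} for D₃. Then γ(D₁) = γ(D₂) = γ(D₃). -/
/-!
In all three graphs `v_i` has out-degree `i` for `i < n`, and `v_3, …, v_n` have the same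
in-neighbours (`v_{i-1}` and the `v_j` with `i < j < n`), so the stationarity equations at
`v_3, …, v_n` coincide. Read from `v_n` downwards they determine `φ` on `v_2, …, v_n` up to the
factor `φ(v_n)`. Together with the equations at `v_1, v_2` they also force the maximum of `φ`
to sit at `v_2` and the minimum at `v_n`, so `γ = φ(v_2) / φ(v_n)` is the same for all three.
-/

namespace PR

open Finset

/-- The stationary mass that reaches `v` along the back edges `(v_j, v)`, `v < j ≤ n - 1`,
each of which carries `φ j / d⁺(v_j) = φ j / j`. -/
noncomputable def backFlow (n : ℕ) (φ : ℕ → ℝ) (v : ℕ) : ℝ :=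
  ∑ j ∈ Icc (v + 1) (n - 1), φ j / j

/-- The stationarity equations at `v_3, …, v_n` when `v_i` has out-degree `i` for `i < n`. -/
def TailBalance (n : ℕ) (φ : ℕ → ℝ) : Prop :=
  ∀ v ∈ Icc 2 (n - 1), φ (v + 1) = φ v / v + backFlow n φ (v + 1)

/-- What the three graphs share: the tail equations, and the equations at `v_1` and `v_2`
with the nonnegative contribution of `v_n` dropped. -/
structure CommonBalance (n : ℕ) (φ : ℕ → ℝ) : Prop where
  pos : ∀ v ∈ Icc 1 n, 0 < φ v
  tail : TailBalance n φ
  backFlow_one_le : backFlow n φ 1 ≤ φ 1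
  add_backFlow_two_le : φ 1 + backFlow n φ 2 ≤ φ 2

section TailBalance

variable {n : ℕ} {φ ψ : ℕ → ℝ}

lemma TailBalance.mul_sub_mul (hφ : TailBalance n φ) (hψ : TailBalance n ψ) (a b : ℝ) :
    TailBalance n (fun v => a * φ v - b * ψ v) := by
  intro v hv
  simp only [hφ v hv, hψ v hv, backFlow, sub_div, sum_sub_distrib, mul_div_assoc, ← mul_sum]
  ring

lemma TailBalance.eq_zero_of_apply_eq_zero (h : TailBalance n φ) (hn : φ n = 0) :
    ∀ v ∈ Icc 2 n, φ v = 0 := by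
  intro v hv
  induction hd : n - v using Nat.strong_induction_on generalizing v with
  | _ d ih =>
  rw [mem_Icc] at hv
  rcases hv.2.eq_or_lt with rfl | hlt
  · exact hn
  have hzero : ∀ j ∈ Icc (v + 1) n, φ j = 0 := fun j hj => by
    rw [mem_Icc] at hj
    exact ih (n - j) (by omega) j (mem_Icc.2 ⟨by omega, hj.2⟩) rfl
  have hflow : backFlow n φ (v + 1) = 0 := sum_eq_zero fun j hj => by
    rw [hzero j (Icc_subset_Icc (by omega) (by omega) hj), zero_div]
  have hbal := h v (mem_Icc.2 ⟨hv.1, by omega⟩)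
  rw [hzero (v + 1) (by simp; omega), hflow, add_zero, eq_comm, div_eq_zero_iff] at hbal
  exact hbal.resolve_right (by norm_cast; omega)

lemma TailBalance.mul_eq_mul (hφ : TailBalance n φ) (hψ : TailBalance n ψ) (hn : 2 ≤ n) :
    φ 2 * ψ n = ψ 2 * φ n := by
  have hzero := (hψ.mul_sub_mul hφ (φ n) (ψ n)).eq_zero_of_apply_eq_zero (by ring) 2
    (by simp [hn])
  linarith

end TailBalance

section BackFlow

variable {n : ℕ} {φ : ℕ → ℝ}

lemma backFlow_nonneg (hpos : ∀ v ∈ Icc 1 n, 0 < φ v) (v : ℕ) : 0 ≤ backFlow n φ v :=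
  sum_nonneg fun j hj => by
    rw [mem_Icc] at hj
    exact div_nonneg (hpos j (mem_Icc.2 ⟨by omega, by omega⟩)).le j.cast_nonneg

lemma backFlow_antitone (hpos : ∀ v ∈ Icc 1 n, 0 < φ v) {v w : ℕ} (hvw : v ≤ w) :
    backFlow n φ w ≤ backFlow n φ v :=
  sum_le_sum_of_subset_of_nonneg (Icc_subset_Icc (by omega) le_rfl) fun j hj _ => by
    rw [mem_Icc] at hj
    exact div_nonneg (hpos j (mem_Icc.2 ⟨by omega, by omega⟩)).le j.cast_nonneg

lemma backFlow_eq_add {v : ℕ} (hv : v + 1 ≤ n - 1) :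
    backFlow n φ v = φ (v + 1) / ↑(v + 1) + backFlow n φ (v + 1) := by
  rw [backFlow, ← insert_Icc_add_one_left_eq_Icc hv, sum_insert (by simp)]
  rfl

lemma backFlow_self : backFlow n φ n = 0 :=
  sum_eq_zero fun j hj => by rw [mem_Icc] at hj; omega

end BackFlow

namespace CommonBalance

variable {n : ℕ} {φ ψ : ℕ → ℝ}

lemma backFlow_le (h : CommonBalance n φ) {v : ℕ} (hv : v ∈ Icc 1 (n - 1)) :
    backFlow n φ v ≤ φ v := by
  rw [mem_Icc] at hv
  obtain rfl | rfl | hv3 : v = 1 ∨ v = 2 ∨ 3 ≤ v := by omega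
  · exact h.backFlow_one_le
  · linarith [h.add_backFlow_two_le, h.pos 1 (by simp; omega)]
  · obtain ⟨w, rfl⟩ : ∃ w, v = w + 1 := ⟨v - 1, by omega⟩
    rw [h.tail w (by simp; omega), le_add_iff_nonneg_left]
    exact div_nonneg (h.pos w (by simp; omega)).le w.cast_nonneg

lemma apply_last (h : CommonBalance n φ) (hn : 3 ≤ n) : φ n = φ (n - 1) / ↑(n - 1) := by
  have hbal := h.tail (n - 1) (by simp; omega)
  rwa [Nat.sub_add_cancel (by omega), backFlow_self, add_zero] at hbal

lemma apply_last_le (h : CommonBalance n φ) (hn : 3 ≤ n) : ∀ v ∈ Icc 1 n, φ n ≤ φ v := by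
  intro v hv
  rw [mem_Icc] at hv
  have hlast := h.apply_last hn
  obtain rfl | rfl | hv' : v = n ∨ v = n - 1 ∨ v + 1 ≤ n - 1 := by omega
  · exact le_rfl
  · rw [hlast]
    exact div_le_self (h.pos (n - 1) (by simp; omega)).le (by norm_cast; omega)
  · calc φ n ≤ backFlow n φ v := by
          rw [hlast]
          exact single_le_sum (f := fun j : ℕ => φ j / j)
            (fun j hj => by
              rw [mem_Icc] at hj
              exact div_nonneg (h.pos j (by simp; omega)).le j.cast_nonneg)
            (by simp; omega)
      _ ≤ φ v := h.backFlow_le (by simp; omega)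

lemma le_apply_two (h : CommonBalance n φ) (hn : 3 ≤ n) : ∀ v ∈ Icc 1 n, φ v ≤ φ 2 := by
  intro v hv
  rw [mem_Icc] at hv
  have hφ₁ := h.pos 1 (by simp; omega)
  have hflow₂ := h.add_backFlow_two_le
  obtain rfl | rfl | rfl | hv4 : v = 1 ∨ v = 2 ∨ v = 3 ∨ 4 ≤ v := by omega
  · linarith [backFlow_nonneg h.pos 2]
  · exact le_rfl
  · -- `backFlow 3` is bounded both by `φ 1` and by `φ 2 - φ 1`, hence by `φ 2 / 2`.
    have hflow₃ : backFlow n φ 3 ≤ backFlow n φ 1 := backFlow_antitone h.pos (by omega)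
    have hflow₃' : backFlow n φ 3 ≤ backFlow n φ 2 := backFlow_antitone h.pos (by omega)
    rw [h.tail 2 (by simp; omega)]
    push_cast
    linarith [h.backFlow_one_le]
  · obtain ⟨w, rfl⟩ : ∃ w, v = w + 2 := ⟨v - 2, by omega⟩
    calc φ (w + 2) = φ (w + 1) / ↑(w + 1) + backFlow n φ (w + 2) :=
          h.tail (w + 1) (by simp; omega)
      _ ≤ φ (w + 1) / ↑(w + 1) + backFlow n φ (w + 1) := by
          gcongr 1
          exact backFlow_antitone h.pos (by omega)
      _ = backFlow n φ w := (backFlow_eq_add (by omega)).symm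
      _ ≤ backFlow n φ 2 := backFlow_antitone h.pos (by omega)
      _ ≤ φ 2 := by linarith

lemma pratio_eq (h : CommonBalance n φ) (hn : 3 ≤ n) : pratio n φ = φ 2 / φ n := by
  have hne : (Icc 1 n).Nonempty := nonempty_Icc.2 (by omega)
  rw [pratio, dif_pos hne]
  congr 1
  · exact le_antisymm (sup'_le _ _ (h.le_apply_two hn)) (le_sup' φ (by simp; omega))
  · exact le_antisymm (inf'_le φ (by simp; omega)) (le_inf' _ _ (h.apply_last_le hn))

lemma pratio_eq_pratio (hφ : CommonBalance n φ) (hψ : CommonBalance n ψ) (hn : 3 ≤ n) :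
    pratio n φ = pratio n ψ := by
  rw [hφ.pratio_eq hn, hψ.pratio_eq hn,
    div_eq_div_iff (hφ.pos n (by simp; omega)).ne' (hψ.pos n (by simp; omega)).ne']
  exact hφ.tail.mul_eq_mul hψ.tail (by omega)

end CommonBalance

structure IsPathWithBackEdges (n : ℕ) (E : ℕ → ℕ → Bool) : Prop where
  adj_iff : ∀ u ∈ Icc 1 (n - 1), ∀ v, E u v = true ↔ v = u + 1 ∨ (1 ≤ v ∧ v < u)
  adj_last : ∀ v, E n v = true → v = 1 ∨ v = 2

lemma isPathWithBackEdges_E1 (n : ℕ) : IsPathWithBackEdges n (E1 n) where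
  adj_iff u hu v := by rw [mem_Icc] at hu; simp only [E1, decide_eq_true_eq]; omega
  adj_last v h := by simp only [E1, decide_eq_true_eq] at h; omega

lemma isPathWithBackEdges_E2 (n : ℕ) : IsPathWithBackEdges n (E2 n) where
  adj_iff u hu v := by rw [mem_Icc] at hu; simp only [E2, decide_eq_true_eq]; omega
  adj_last v h := by simp only [E2, decide_eq_true_eq] at h; omega

lemma isPathWithBackEdges_E3 (n : ℕ) : IsPathWithBackEdges n (E3 n) where
  adj_iff u hu v := by rw [mem_Icc] at hu; simp only [E3, decide_eq_true_eq]; omega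
  adj_last v h := by simp only [E3, decide_eq_true_eq] at h; omega

namespace IsPathWithBackEdges

variable {n : ℕ} {E : ℕ → ℕ → Bool} {φ : ℕ → ℝ}

lemma outDeg_eq (hE : IsPathWithBackEdges n E) {u : ℕ} (hu : u ∈ Icc 1 (n - 1)) :
    outDeg n E u = u := by
  have hu' := mem_Icc.1 hu
  have hout : (Icc 1 n).filter (fun v => E u v) = insert (u + 1) (Icc 1 (u - 1)) := by
    ext v
    simp only [mem_filter, mem_Icc, mem_insert, hE.adj_iff u hu]
    omega
  rw [outDeg, hout, card_insert_of_notMem (by simp), Nat.card_Icc]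
  omega

lemma apply_eq (hE : IsPathWithBackEdges n E) (hφ : IsPerron n E φ) {v : ℕ}
    (hv : v ∈ Icc 1 n) :
    φ v = ∑ u ∈ (Icc 1 (n - 1)).filter (fun u => v = u + 1 ∨ (1 ≤ v ∧ v < u)), φ u / u +
      if E n v then φ n / outDeg n E n else 0 := by
  have hn : 1 ≤ n := (mem_Icc.1 hv).1.trans (mem_Icc.1 hv).2
  rw [hφ.2.2 v hv, ← insert_Icc_sub_one_right_eq_Icc hn, sum_insert (by simp; omega),
    add_comm, sum_ite, sum_const_zero, add_zero]
  congr 1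
  rw [filter_congr fun u hu => hE.adj_iff u hu v]
  exact sum_congr rfl fun u hu => by rw [hE.outDeg_eq (mem_filter.1 hu).1]

lemma commonBalance (hE : IsPathWithBackEdges n E) (hn : 3 ≤ n) (hφ : IsPerron n E φ) :
    CommonBalance n φ := by
  have hlast : ∀ v, 0 ≤ (if E n v then φ n / outDeg n E n else 0 : ℝ) := fun v => by
    split_ifs
    exacts [div_nonneg (hφ.1 n (by simp; omega)).le (Nat.cast_nonneg _), le_rfl]
  refine ⟨hφ.1, fun v hv => ?_, ?_, ?_⟩
  · rw [mem_Icc] at hv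
    have hfilter : (Icc 1 (n - 1)).filter (fun u => v + 1 = u + 1 ∨ (1 ≤ v + 1 ∧ v + 1 < u))
        = insert v (Icc (v + 1 + 1) (n - 1)) := by
      ext u; simp only [mem_filter, mem_Icc, mem_insert]; omega
    have hnot_last : E n (v + 1) = false := Bool.eq_false_iff.2 fun hadj => by
      have := hE.adj_last (v + 1) hadj
      omega
    rw [hE.apply_eq hφ (by simp; omega), hfilter, sum_insert (by simp), hnot_last, if_neg (by simp),
      add_zero]
    rfl
  · have hfilter : (Icc 1 (n - 1)).filter (fun u => 1 = u + 1 ∨ (1 ≤ 1 ∧ 1 < u))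
        = Icc (1 + 1) (n - 1) := by
      ext u; simp only [mem_filter, mem_Icc]; omega
    rw [hE.apply_eq hφ (v := 1) (by simp; omega), hfilter]
    exact le_add_of_nonneg_right (hlast 1)
  · have hfilter : (Icc 1 (n - 1)).filter (fun u => 2 = u + 1 ∨ (1 ≤ 2 ∧ 2 < u))
        = insert 1 (Icc (2 + 1) (n - 1)) := by
      ext u; simp only [mem_filter, mem_Icc, mem_insert]; omega
    rw [hE.apply_eq hφ (v := 2) (by simp; omega), hfilter, sum_insert (by simp),
      Nat.cast_one, div_one]
    exact le_add_of_nonneg_right (hlast 2)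

end IsPathWithBackEdges

/-- The three extremal graphs `D₁`, `D₂`, `D₃` have the same principal ratio. -/
theorem stmt17 (n : ℕ) (hn : 3 ≤ n) (φ₁ φ₂ φ₃ : ℕ → ℝ)
    (hφ₁ : IsPerron n (E1 n) φ₁) (hφ₂ : IsPerron n (E2 n) φ₂)
    (hφ₃ : IsPerron n (E3 n) φ₃) :
    pratio n φ₁ = pratio n φ₂ ∧ pratio n φ₂ = pratio n φ₃ := by
  have h₁ := (isPathWithBackEdges_E1 n).commonBalance hn hφ₁
  have h₂ := (isPathWithBackEdges_E2 n).commonBalance hn hφ₂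
  have h₃ := (isPathWithBackEdges_E3 n).commonBalance hn hφ₃
  exact ⟨h₁.pratio_eq_pratio h₂ hn, h₂.pratio_eq_pratio h₃ hn⟩

end PR
end
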